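/- Second-moment expansion of the kernel derivative: let v_n(X_n,x) = (1/h_n²)K′((x−X_n)/h_n), where X_n has density g. Under assumptions (A1)–(A2), E[v_n²(X_n,x)] = ξ² g(x)/h_n³ + Δ_n(x) with sup_{x∈ℝ}|Δ_n(x)| = O(h_n^{−2}), where ξ² = ∫(K′(y))²dy. Consequently, with W_n(x) = ∑_{k=1}^n v_k²(X_k,x), lim_{n→∞} E[W_n(x)]/n^{1+3α} = ξ² g(x)/(1+3α) for every x ∈ ℝ. -/

import Mathlib

/-!
Substituting `t = x - h y` in `E[v_n(X_n, x)²] = h⁻⁴ ∫ g(t) K'((x - t)/h)² dt` gives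
`h⁻³ ∫ K'(y)² g(x - h y) dy`. Since `g'` is bounded, `g` is Lipschitz, so replacing
`g(x - h y)` by `g(x)` costs at most `h · Lip(g) · ∫ |y| K'(y)²`, which is finite because `K'` is
bounded and has a finite fourth moment. This is the `O(h⁻²)` remainder.

For the sum, `h_k⁻³ = k^{3α}` and `∑_{k ≤ n} k^{3α} ~ n^{1+3α}/(1+3α)` by comparison with
`∫₀ⁿ t^{3α} dt`, while the remainders add up to `O(n^{1+2α}) = o(n^{1+3α})`.
-/

open MeasureTheory ProbabilityTheory Filter Real Finset
open scoped ENNReal NNReal Topology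

lemma integrable_abs_pow_mul_abs_of_abs_le {φ : ℝ → ℝ} {C : ℝ} (hφ : Measurable φ)
    (hC : ∀ t, |φ t| ≤ C) (h4 : Integrable fun t => t ^ 4 * |φ t|) {k : ℕ} (hk : k ≤ 4) :
    Integrable fun t => |t| ^ k * |φ t| := by
  have hC0 : 0 ≤ C := (abs_nonneg _).trans (hC 0)
  have hCi : Integrable ((Set.Icc (-1 : ℝ) 1).indicator fun _ => C) :=
    (integrable_indicator_iff measurableSet_Icc).2 (integrableOn_const measure_Icc_lt_top.ne)
  refine (hCi.add h4).mono' (by fun_prop) (Eventually.of_forall fun t => ?_)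
  have h4t : 0 ≤ t ^ 4 * |φ t| := by positivity
  rw [Real.norm_eq_abs, abs_of_nonneg (by positivity), Pi.add_apply]
  rcases le_or_gt |t| 1 with ht | ht
  · have hbdd : |t| ^ k * |φ t| ≤ C :=
      (mul_le_of_le_one_left (abs_nonneg _) (pow_le_one₀ (abs_nonneg t) ht)).trans (hC t)
    rw [Set.indicator_of_mem (show t ∈ Set.Icc (-1 : ℝ) 1 from abs_le.1 ht)]
    linarith
  · have hpow : |t| ^ k ≤ t ^ 4 :=
      (pow_le_pow_right₀ ht.le hk).trans_eq ((by decide : Even 4).pow_abs t)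
    have htail := mul_le_mul_of_nonneg_right hpow (abs_nonneg (φ t))
    have hind : 0 ≤ (Set.Icc (-1 : ℝ) 1).indicator (fun _ => C) t :=
      Set.indicator_nonneg (fun _ _ => hC0) t
    linarith

lemma integrable_pow_mul_sq_of_abs_le {φ : ℝ → ℝ} {C : ℝ} (hφ : Measurable φ)
    (hC : ∀ t, |φ t| ≤ C) (h4 : Integrable fun t => t ^ 4 * |φ t|) {k : ℕ} (hk : k ≤ 4) :
    Integrable fun t => t ^ k * φ t ^ 2 := by
  refine ((integrable_abs_pow_mul_abs_of_abs_le hφ hC h4 hk).const_mul C).mono' (by fun_prop)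
    (Eventually.of_forall fun t => ?_)
  rw [Real.norm_eq_abs, abs_mul, abs_pow, abs_pow, sq, ← mul_assoc, mul_comm C]
  exact mul_le_mul_of_nonneg_left (hC t) (by positivity)

lemma integral_comp_eq_integral_mul_density {Ω : Type*} [MeasurableSpace Ω] {μ : Measure Ω}
    {X : Ω → ℝ} {g : ℝ → ℝ} (hX : Measurable X)
    (hlaw : μ.map X = volume.withDensity fun t => ENNReal.ofReal (g t))
    (hgm : Measurable g) (hg0 : ∀ t, 0 ≤ g t) {F : ℝ → ℝ} (hF : Measurable F) :
    ∫ ω, F (X ω) ∂μ = ∫ t, g t * F t := by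
  rw [← integral_map hX.aemeasurable hF.aestronglyMeasurable, hlaw,
    integral_withDensity_eq_integral_toReal_smul hgm.ennreal_ofReal
      (ae_of_all _ fun _ => ENNReal.ofReal_lt_top)]
  simp only [ENNReal.toReal_ofReal (hg0 _), smul_eq_mul]

lemma integral_mul_comp_sub_div (G F : ℝ → ℝ) (x : ℝ) {c : ℝ} (hc : 0 < c) :
    ∫ t, G t * F ((x - t) / c) = c * ∫ y, F y * G (x - c * y) := by
  rw [← integral_sub_left_eq_self _ volume x]
  simp only [sub_sub_cancel]
  have hcomp := Measure.integral_comp_div (fun y => F y * G (x - c * y)) c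
  simp only [mul_div_cancel₀ _ hc.ne', abs_of_pos hc, smul_eq_mul] at hcomp
  rw [← hcomp]
  exact integral_congr_ae (ae_of_all _ fun t => mul_comm _ _)

lemma abs_integral_mul_comp_sub_le {ψ g : ℝ → ℝ} {L : ℝ≥0} (hg : LipschitzWith L g)
    (hψ : Integrable ψ) (hψ1 : Integrable fun y => y * ψ y) (x c : ℝ) :
    |(∫ y, ψ y * g (x - c * y)) - (∫ y, ψ y) * g x| ≤ L * |c| * ∫ y, |y * ψ y| := by
  have hpoint : ∀ y, |ψ y * (g (x - c * y) - g x)| ≤ L * |c| * |y * ψ y| := by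
    intro y
    have := hg.dist_le_mul (x - c * y) x
    rw [Real.dist_eq, Real.dist_eq, sub_sub_cancel_left, abs_neg, abs_mul] at this
    rw [abs_mul, abs_mul]
    calc |ψ y| * |g (x - c * y) - g x| ≤ |ψ y| * (L * (|c| * |y|)) := by gcongr
      _ = _ := by ring
  have hint : Integrable fun y => ψ y * (g (x - c * y) - g x) := by
    have := hg.continuous
    exact (hψ1.abs.const_mul _).mono' (hψ.1.mul (by fun_prop)) (ae_of_all _ hpoint)
  have hsplit : ∫ y, ψ y * g (x - c * y)
      = (∫ y, ψ y * (g (x - c * y) - g x)) + (∫ y, ψ y) * g x := by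
    rw [← integral_mul_const, ← integral_add hint (hψ.mul_const _)]
    exact integral_congr_ae (ae_of_all _ fun y => by ring)
  rw [hsplit, add_sub_cancel_right, ← integral_const_mul]
  exact norm_integral_le_of_norm_le (hψ1.abs.const_mul _)
    (ae_of_all _ fun y => (Real.norm_eq_abs _).trans_le (hpoint y))

lemma abs_integral_sq_kernel_sub_le {Ω : Type*} [MeasurableSpace Ω] {μ : Measure Ω}
    {X : Ω → ℝ} {g k : ℝ → ℝ} {L : ℝ≥0} (hX : Measurable X)
    (hlaw : μ.map X = volume.withDensity fun t => ENNReal.ofReal (g t))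
    (hg0 : ∀ t, 0 ≤ g t) (hgL : LipschitzWith L g) (hk : Measurable k)
    (hk2 : Integrable fun y => k y ^ 2) (hk3 : Integrable fun y => y * k y ^ 2)
    (x : ℝ) {c : ℝ} (hc : 0 < c) :
    |(∫ ω, (1 / c ^ 2 * k ((x - X ω) / c)) ^ 2 ∂μ) - (∫ y, k y ^ 2) * g x / c ^ 3|
      ≤ L * (∫ y, |y * k y ^ 2|) / c ^ 2 := by
  have hmoment : ∫ ω, (1 / c ^ 2 * k ((x - X ω) / c)) ^ 2 ∂μ
      = (∫ y, k y ^ 2 * g (x - c * y)) / c ^ 3 := by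
    rw [integral_comp_eq_integral_mul_density (F := fun t => (1 / c ^ 2 * k ((x - t) / c)) ^ 2)
      hX hlaw hgL.continuous.measurable hg0 (by fun_prop)]
    calc ∫ t, g t * (1 / c ^ 2 * k ((x - t) / c)) ^ 2
        = (∫ t, g t * k ((x - t) / c) ^ 2) / c ^ 4 := by
          rw [← integral_div]
          exact integral_congr_ae (ae_of_all _ fun t => by ring)
      _ = _ := by
          rw [integral_mul_comp_sub_div _ (fun y => k y ^ 2) x hc]
          field_simp
  have hbias := abs_integral_mul_comp_sub_le hgL hk2 hk3 x c
  rw [abs_of_pos hc] at hbias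
  rw [hmoment, ← sub_div, abs_div, abs_of_pos (pow_pos hc 3), div_le_div_iff₀ (by positivity)
    (by positivity)]
  calc _ ≤ L * c * (∫ y, |y * k y ^ 2|) * c ^ 2 := by gcongr
    _ = _ := by ring

lemma tendsto_sum_Icc_rpow_div_rpow {p : ℝ} (hp : 0 ≤ p) :
    Tendsto (fun n : ℕ => (∑ k ∈ Icc 1 n, (k : ℝ) ^ p) / (n : ℝ) ^ (1 + p)) atTop
      (𝓝 (1 / (1 + p))) := by
  have hp1 : 0 < 1 + p := by linarith
  have hmono : MonotoneOn (fun t : ℝ => t ^ p) (Set.Ici 0) :=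
    monotoneOn_rpow_Ici_of_exponent_nonneg hp
  have hsum : ∀ n : ℕ, ∑ k ∈ Icc 1 n, (k : ℝ) ^ p = ∑ i ∈ range n, ((i : ℝ) + 1) ^ p := by
    intro n
    rw [← Ico_add_one_right_eq_Icc, sum_Ico_eq_sum_range]
    simp [add_comm]
  have hlower : ∀ n : ℕ, (n : ℝ) ^ (1 + p) / (1 + p) ≤ ∑ k ∈ Icc 1 n, (k : ℝ) ^ p := by
    intro n
    have := (hmono.mono Set.Icc_subset_Ici_self).integral_le_sum (x₀ := 0) (a := n)
    rw [integral_rpow (Or.inl (by linarith))] at this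
    rw [hsum]
    simpa [zero_rpow (by linarith : p + 1 ≠ 0), add_comm] using this
  have hupper : ∀ n : ℕ, ∑ k ∈ Icc 1 n, (k : ℝ) ^ p ≤ ((n : ℝ) + 1) ^ (1 + p) / (1 + p) := by
    intro n
    have := (hmono.mono fun t ht => zero_le_one.trans ht.1).sum_le_integral (x₀ := 1) (a := n)
    rw [integral_rpow (Or.inl (by linarith))] at this
    rw [hsum]
    simp only [add_comm (1 : ℝ), one_rpow] at this
    rw [add_comm p] at this
    exact this.trans (by gcongr; linarith)
  have hratio : Tendsto (fun n : ℕ => (1 + (n : ℝ)⁻¹) ^ (1 + p) / (1 + p)) atTop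
      (𝓝 (1 / (1 + p))) := by
    have h1 : Tendsto (fun n : ℕ => 1 + (n : ℝ)⁻¹) atTop (𝓝 1) := by
      simpa using (tendsto_const_nhds (x := (1 : ℝ))).add
        (tendsto_inv_atTop_zero.comp tendsto_natCast_atTop_atTop)
    simpa using ((continuous_rpow_const hp1.le).tendsto 1 |>.comp h1).div_const (1 + p)
  refine tendsto_of_tendsto_of_tendsto_of_le_of_le' tendsto_const_nhds hratio ?_ ?_
  · filter_upwards [eventually_gt_atTop 0] with n hn
    have hn' : (0 : ℝ) < n := by exact_mod_cast hn
    rw [le_div_iff₀ (by positivity)]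
    calc 1 / (1 + p) * (n : ℝ) ^ (1 + p) = (n : ℝ) ^ (1 + p) / (1 + p) := by ring
      _ ≤ _ := hlower n
  · filter_upwards [eventually_gt_atTop 0] with n hn
    have hn' : (0 : ℝ) < n := by exact_mod_cast hn
    rw [div_le_iff₀ (by positivity)]
    calc _ ≤ ((n : ℝ) + 1) ^ (1 + p) / (1 + p) := hupper n
      _ = _ := by
        rw [div_mul_eq_mul_div, ← mul_rpow (by positivity) hn'.le]
        field_simp

lemma tendsto_sum_Icc_div_rpow_of_abs_sub_le {a : ℕ → ℝ} {A B p q : ℝ} (hq : 0 ≤ q)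
    (hqp : q < p) (ha : ∀ k, 1 ≤ k → |a k - A * (k : ℝ) ^ p| ≤ B * (k : ℝ) ^ q) :
    Tendsto (fun n : ℕ => (∑ k ∈ Icc 1 n, a k) / (n : ℝ) ^ (1 + p)) atTop
      (𝓝 (A / (1 + p))) := by
  have hB : 0 ≤ B := by simpa using (abs_nonneg _).trans (ha 1 le_rfl)
  have herror : ∀ n : ℕ, |(∑ k ∈ Icc 1 n, a k) - A * ∑ k ∈ Icc 1 n, (k : ℝ) ^ p|
      ≤ B * (n : ℝ) ^ (1 + q) := by
    intro n
    calc |(∑ k ∈ Icc 1 n, a k) - A * ∑ k ∈ Icc 1 n, (k : ℝ) ^ p|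
        ≤ ∑ k ∈ Icc 1 n, |a k - A * (k : ℝ) ^ p| := by
          rw [mul_sum, ← sum_sub_distrib]; exact abs_sum_le_sum_abs _ _
      _ ≤ ∑ _k ∈ Icc 1 n, B * (n : ℝ) ^ q := by
          refine sum_le_sum fun k hk => (ha k (mem_Icc.1 hk).1).trans ?_
          gcongr
          exact_mod_cast (mem_Icc.1 hk).2
      _ = B * (n : ℝ) ^ (1 + q) := by
          rcases Nat.eq_zero_or_pos n with rfl | hn
          · simp [zero_rpow (by linarith : 1 + q ≠ 0)]
          rw [sum_const, Nat.card_Icc, nsmul_eq_mul, rpow_add (by exact_mod_cast hn), rpow_one]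
          push_cast; ring
  have hmain : Tendsto (fun n : ℕ => A * ((∑ k ∈ Icc 1 n, (k : ℝ) ^ p) / (n : ℝ) ^ (1 + p)))
      atTop (𝓝 (A / (1 + p))) := by
    rw [div_eq_mul_one_div A]
    exact (tendsto_sum_Icc_rpow_div_rpow (hq.trans hqp.le)).const_mul A
  have hrem : Tendsto (fun n : ℕ => ((∑ k ∈ Icc 1 n, a k) - A * ∑ k ∈ Icc 1 n, (k : ℝ) ^ p)
      / (n : ℝ) ^ (1 + p)) atTop (𝓝 0) := by
    have hdecay : Tendsto (fun n : ℕ => B * (n : ℝ) ^ (-(p - q))) atTop (𝓝 0) := by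
      simpa only [mul_zero, Function.comp_def] using
        ((tendsto_rpow_neg_atTop (y := p - q) (by linarith)).comp
          tendsto_natCast_atTop_atTop).const_mul B
    refine squeeze_zero_norm' ?_ hdecay
    filter_upwards [eventually_gt_atTop 0] with n hn
    have hn' : (0 : ℝ) < n := by exact_mod_cast hn
    rw [norm_div, Real.norm_of_nonneg (by positivity : (0 : ℝ) ≤ (n : ℝ) ^ (1 + p)),
      Real.norm_eq_abs, div_le_iff₀ (by positivity), mul_assoc, ← rpow_add hn']
    rw [show -(p - q) + (1 + p) = 1 + q by ring]
    exact herror n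
  have hlim := hmain.add hrem
  rw [add_zero] at hlim
  exact hlim.congr fun n => by ring

lemma one_div_rpow_neg_pow {x : ℝ} (hx : 0 ≤ x) (a : ℝ) (m : ℕ) :
    1 / (x ^ (-a)) ^ m = x ^ (m * a) := by
  rw [← rpow_natCast, ← rpow_mul hx, one_div, ← rpow_neg hx]
  ring_nf

theorem stmt_12_general
    {Ω : Type*} [MeasureSpace Ω] [IsProbabilityMeasure (ℙ : Measure Ω)]
    (α : ℝ) (hα0 : 0 < α)
    (h : ℕ → ℝ) (hband : ∀ n : ℕ, h n = (n : ℝ) ^ (-α))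
    (X : ℕ → Ω → ℝ) (g : ℝ → ℝ)
    (hXmeas : ∀ n, Measurable (X n))
    (hgpos : ∀ t, 0 < g t)
    (hXlaw : ∀ n, Measure.map (X n) ℙ
      = volume.withDensity (fun t => ENNReal.ofReal (g t)))
    (K K' : ℝ → ℝ)
    (hKderiv : ∀ t, HasDerivAt K (K' t) t)
    (hK'bdd : ∃ C, ∀ t, |K' t| ≤ C)
    (hK'mom4 : Integrable (fun t => t ^ 4 * |K' t|))
    (g' : ℝ → ℝ)
    (hg : ∀ t, HasDerivAt g (g' t) t)
    (hg'bdd : ∃ C, ∀ t, |g' t| ≤ C)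
    (ξ2 : ℝ) (hξ2 : ξ2 = ∫ t, (K' t) ^ 2)
    (v : ℕ → ℝ → Ω → ℝ)
    (hv : ∀ n x ω, v n x ω = (1 / h n ^ 2) * K' ((x - X n ω) / h n))
    (W : ℕ → ℝ → Ω → ℝ)
    (hW : ∀ n x ω, W n x ω = ∑ k ∈ Finset.Icc 1 n, (v k x ω) ^ 2)
    :
    (∃ C : ℝ, 0 < C ∧ ∀ n : ℕ, 1 ≤ n → ∀ x : ℝ,
        |(∫ ω, (v n x ω) ^ 2 ∂ℙ) - ξ2 * g x / h n ^ 3| ≤ C / h n ^ 2) ∧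
    ∀ x : ℝ,
      Tendsto (fun n : ℕ => (∫ ω, W n x ω ∂ℙ) / (n : ℝ) ^ (1 + 3 * α))
        atTop (𝓝 (ξ2 * g x / (1 + 3 * α))) := by
  obtain ⟨CK, hCK⟩ := hK'bdd
  obtain ⟨Cg', hCg'⟩ := hg'bdd
  have hK'meas : Measurable K' := funext (fun t => (hKderiv t).deriv) ▸ measurable_deriv K
  have hgL : LipschitzWith Cg'.toNNReal g :=
    lipschitzWith_of_nnnorm_deriv_le (fun t => (hg t).differentiableAt) fun t => by
      rw [(hg t).deriv, ← NNReal.coe_le_coe, coe_nnnorm, Real.coe_toNNReal']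
      exact (hCg' t).trans (le_max_left _ _)
  have hK'2 : Integrable fun t => K' t ^ 2 := by
    simpa using integrable_pow_mul_sq_of_abs_le hK'meas hCK hK'mom4 (k := 0) (by norm_num)
  have hK'3 : Integrable fun t => t * K' t ^ 2 := by
    simpa using integrable_pow_mul_sq_of_abs_le hK'meas hCK hK'mom4 (k := 1) (by norm_num)
  set B : ℝ := Cg'.toNNReal * ∫ y, |y * K' y ^ 2|
  have hh : ∀ n : ℕ, 1 ≤ n → 0 < h n := fun n hn =>
    hband n ▸ rpow_pos_of_pos (by exact_mod_cast hn) _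
  have hmoment : ∀ n, 1 ≤ n → ∀ x,
      |(∫ ω, v n x ω ^ 2 ∂ℙ) - ξ2 * g x / h n ^ 3| ≤ B / h n ^ 2 := by
    intro n hn x
    simp only [hv, hξ2]
    exact abs_integral_sq_kernel_sub_le (hXmeas n) (hXlaw n) (fun t => (hgpos t).le) hgL
      hK'meas hK'2 hK'3 x (hh n hn)
  refine ⟨⟨B + 1, by positivity, fun n hn x => (hmoment n hn x).trans ?_⟩, fun x => ?_⟩
  · have := hh n hn
    gcongr
    linarith
  have hEW : ∀ n, ∫ ω, W n x ω ∂ℙ = ∑ k ∈ Icc 1 n, ∫ ω, v k x ω ^ 2 ∂ℙ := by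
    intro n
    simp_rw [hW]
    refine integral_finsetSum _ fun k _ => ?_
    simp_rw [hv]
    have hmeas : Measurable fun ω => (1 / h k ^ 2 * K' ((x - X k ω) / h k)) ^ 2 := by
      have := hXmeas k
      fun_prop
    refine Integrable.of_bound hmeas.aestronglyMeasurable ((|1 / h k ^ 2| * CK) ^ 2)
      (ae_of_all _ fun ω => ?_)
    rw [norm_pow, norm_mul, Real.norm_eq_abs, Real.norm_eq_abs]
    gcongr
    exact hCK _
  simp_rw [hEW]
  refine tendsto_sum_Icc_div_rpow_of_abs_sub_le (B := B) (q := 2 * α) (by positivity)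
    (by linarith) fun k hk => ?_
  have hk0 : (0 : ℝ) ≤ k := k.cast_nonneg
  have := hmoment k hk x
  rwa [div_eq_mul_one_div _ (h k ^ 3), div_eq_mul_one_div _ (h k ^ 2), hband,
    one_div_rpow_neg_pow hk0, one_div_rpow_neg_pow hk0] at this

theorem stmt_12
    {Ω : Type*} [MeasureSpace Ω] [IsProbabilityMeasure (ℙ : Measure Ω)]
    (α : ℝ) (hα0 : 0 < α) (hα1 : α < 1)
    (h : ℕ → ℝ) (hband : ∀ n : ℕ, h n = (n : ℝ) ^ (-α))
    (X : ℕ → Ω → ℝ) (g : ℝ → ℝ)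
    (hXmeas : ∀ n, Measurable (X n))
    (hXindep : iIndepFun X ℙ)
    (hgpos : ∀ t, 0 < g t)
    (hXlaw : ∀ n, Measure.map (X n) ℙ
      = volume.withDensity (fun t => ENNReal.ofReal (g t)))
    (f : ℝ → ℝ)
    (K K' : ℝ → ℝ)
    (hKpos : ∀ t, 0 ≤ K t)
    (hKsymm : ∀ t, K (-t) = K t)
    (hKbdd : ∃ C, ∀ t, K t ≤ C)
    (hKderiv : ∀ t, HasDerivAt K (K' t) t)
    (hK'bdd : ∃ C, ∀ t, |K' t| ≤ C)
    (hKint : ∫ t, K t = 1)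
    (hK'int : ∫ t, K' t = 0)
    (hK'mom1 : ∫ t, t * K' t = -1)
    (hK'mom2 : ∫ t, t ^ 2 * K' t = 0)
    (hKmom4 : Integrable (fun t => t ^ 4 * K t))
    (hK'mom4 : Integrable (fun t => t ^ 4 * |K' t|))
    (f' f'' : ℝ → ℝ)
    (hf : ∀ t, HasDerivAt f (f' t) t) (hf' : ∀ t, HasDerivAt f' (f'' t) t)
    (hfbdd : ∃ C, ∀ t, |f t| ≤ C) (hf'bdd : ∃ C, ∀ t, |f' t| ≤ C)
    (hf''bdd : ∃ C, ∀ t, |f'' t| ≤ C)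
    (g' g'' : ℝ → ℝ)
    (hg : ∀ t, HasDerivAt g (g' t) t) (hg' : ∀ t, HasDerivAt g' (g'' t) t)
    (hgbdd : ∃ C, ∀ t, |g t| ≤ C) (hg'bdd : ∃ C, ∀ t, |g' t| ≤ C)
    (hg''bdd : ∃ C, ∀ t, |g'' t| ≤ C)
    (ξ2 : ℝ) (hξ2 : ξ2 = ∫ t, (K' t) ^ 2)
    (v : ℕ → ℝ → Ω → ℝ)
    (hv : ∀ n x ω, v n x ω = (1 / h n ^ 2) * K' ((x - X n ω) / h n))
    (W : ℕ → ℝ → Ω → ℝ)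
    (hW : ∀ n x ω, W n x ω = ∑ k ∈ Finset.Icc 1 n, (v k x ω) ^ 2)
    :
    (∃ C : ℝ, 0 < C ∧ ∀ n : ℕ, 1 ≤ n → ∀ x : ℝ,
        |(∫ ω, (v n x ω) ^ 2 ∂ℙ) - ξ2 * g x / h n ^ 3| ≤ C / h n ^ 2) ∧
    ∀ x : ℝ,
      Tendsto (fun n : ℕ => (∫ ω, W n x ω ∂ℙ) / (n : ℝ) ^ (1 + 3 * α))
        atTop (𝓝 (ξ2 * g x / (1 + 3 * α))) :=
  stmt_12_general α hα0 h hband X g hXmeas hgpos hXlaw K K' hKderiv hK'bdd hK'mom4 g' hg hg'bdd ξ2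
    hξ2 v hv W hW
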